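/- arXiv:1711.05893 — 6 statements merged into one kernel-verified Lean document; each statement's English description precedes it below -/
import Mathlib

section
/- Any finite sample S of labelled points in R^d (with labels in {±1}) that is not realizable by a half-space contains a non-realizable subsample of size at most 2d+2. (I.e., the coVC dimension of half-spaces in R^d is at most 2d+2.) -/
/-- A sample (list of labelled points in ℝ^d) is realizable by a half-space:
some affine functional is strictly positive on positive examples and strictly
negative on negative examples. -/
def HSRealizable (d : ℕ) (S : List ((Fin d → ℝ) × Bool)) : Prop :=
  ∃ (w : Fin d → ℝ) (b : ℝ), ∀ p ∈ S,
    (p.2 = true → 0 < (∑ i, w i * p.1 i) + b) ∧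
    (p.2 = false → (∑ i, w i * p.1 i) + b < 0)

/-- The linear functional `x ↦ ∑ i, w i * x i` as a linear map. -/
noncomputable def dotLM (d : ℕ) (w : Fin d → ℝ) : (Fin d → ℝ) →ₗ[ℝ] ℝ where
  toFun x := ∑ i, w i * x i
  map_add' x y := by simp [mul_add, Finset.sum_add_distrib]
  map_smul' c x := by
    simp only [Finset.mul_sum, smul_eq_mul, RingHom.id_apply]
    exact Finset.sum_congr rfl fun i _ => by simp [Pi.smul_apply, smul_eq_mul]; ring

lemma caratheodory_card (d : ℕ) {A : Set (Fin d → ℝ)} {p : Fin d → ℝ}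
    (hp : p ∈ convexHull ℝ A) :
    ∃ t : Finset (Fin d → ℝ), ↑t ⊆ A ∧ t.card ≤ d + 1 ∧ p ∈ convexHull ℝ (↑t : Set (Fin d → ℝ)) := by
  rw [convexHull_eq_union] at hp
  simp only [Set.mem_iUnion] at hp
  obtain ⟨t, hts, hai, hpt⟩ := hp
  refine ⟨t, hts, ?_, hpt⟩
  have := hai.card_le_finrank_succ
  have hle : Module.finrank ℝ (vectorSpan ℝ (Set.range ((↑) : t → (Fin d → ℝ)))) ≤ d := by
    calc Module.finrank ℝ (vectorSpan ℝ (Set.range ((↑) : t → (Fin d → ℝ))))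
        ≤ Module.finrank ℝ (Fin d → ℝ) := Submodule.finrank_le _
      _ = d := by simp
  have hcard : Fintype.card t = t.card := Fintype.card_coe t
  omega

/-- The coVC dimension of half-spaces in ℝ^d is at most 2d+2: every
non-realizable sample contains a non-realizable subsample of size ≤ 2d+2. -/
theorem covc_halfspaces (d : ℕ) (S : List ((Fin d → ℝ) × Bool))
    (hS : ¬ HSRealizable d S) :
    ∃ S' : List ((Fin d → ℝ) × Bool),
      (∀ z ∈ S', z ∈ S) ∧ S'.length ≤ 2 * d + 2 ∧ ¬ HSRealizable d S' := by
  classical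
  set P : Set (Fin d → ℝ) := {x | (x, true) ∈ S} with hP
  set N : Set (Fin d → ℝ) := {x | (x, false) ∈ S} with hN
  have hPfin : P.Finite := by
    apply Set.Finite.subset (Set.Finite.image Prod.fst (List.finite_toSet S))
    intro x hx; exact ⟨(x, true), hx, rfl⟩
  have hNfin : N.Finite := by
    apply Set.Finite.subset (Set.Finite.image Prod.fst (List.finite_toSet S))
    intro x hx; exact ⟨(x, false), hx, rfl⟩
  by_cases hdisj : Disjoint (convexHull ℝ P) (convexHull ℝ N)
  · -- separation gives realizability of S, contradiction
    exfalso
    obtain ⟨f, u, v, hfu, huv, hfv⟩ :=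
      geometric_hahn_banach_compact_closed (convex_convexHull ℝ P)
        (hPfin.isCompact_convexHull ℝ) (convex_convexHull ℝ N)
        (hNfin.isClosed_convexHull ℝ) hdisj
    apply hS
    refine ⟨fun i => -(f fun j => if i = j then 1 else 0), (u + v) / 2, ?_⟩
    intro p hp
    have hfp : (∑ i, (fun i => -(f fun j => if i = j then 1 else 0)) i * p.1 i) = -(f p.1) := by
      have := LinearMap.pi_apply_eq_sum_univ (f : (Fin d → ℝ) →ₗ[ℝ] ℝ) p.1
      simp only [ContinuousLinearMap.coe_coe] at this
      rw [this]
      rw [← Finset.sum_neg_distrib]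
      exact Finset.sum_congr rfl fun i _ => by simp [smul_eq_mul]; ring
    constructor
    · intro hpt
      have hmem : p.1 ∈ convexHull ℝ P := subset_convexHull ℝ P (by
        have : (p.1, true) ∈ S := by rwa [show (p.1, true) = p from Prod.ext rfl hpt.symm]
        exact this)
      have := hfu _ hmem
      rw [hfp]; linarith
    · intro hpf
      have hmem : p.1 ∈ convexHull ℝ N := subset_convexHull ℝ N (by
        have : (p.1, false) ∈ S := by rwa [show (p.1, false) = p from Prod.ext rfl hpf.symm]
        exact this)
      have := hfv _ hmem
      rw [hfp]; linarith
  · -- hulls intersect; Carathéodory gives small witness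
    rw [Set.not_disjoint_iff] at hdisj
    obtain ⟨p, hpP, hpN⟩ := hdisj
    obtain ⟨tP, htPs, htPc, hptP⟩ := caratheodory_card d hpP
    obtain ⟨tN, htNs, htNc, hptN⟩ := caratheodory_card d hpN
    refine ⟨tP.toList.map (fun x => (x, true)) ++ tN.toList.map (fun x => (x, false)), ?_, ?_, ?_⟩
    · intro z hz
      rcases List.mem_append.1 hz with hz | hz <;> obtain ⟨x, hx, rfl⟩ := List.mem_map.1 hz
      · exact htPs (Finset.mem_toList.1 hx)
      · exact htNs (Finset.mem_toList.1 hx)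
    · simp only [List.length_append, List.length_map, Finset.length_toList]
      omega
    · rintro ⟨w, b, hwb⟩
      have hpos : ∀ x ∈ tP, -b < dotLM d w x := by
        intro x hx
        have := (hwb (x, true) (List.mem_append.2 (Or.inl
          (List.mem_map.2 ⟨x, Finset.mem_toList.2 hx, rfl⟩)))).1 rfl
        simp only [dotLM, LinearMap.coe_mk, AddHom.coe_mk]
        linarith
      have hneg : ∀ x ∈ tN, dotLM d w x < -b := by
        intro x hx
        have := (hwb (x, false) (List.mem_append.2 (Or.inr
          (List.mem_map.2 ⟨x, Finset.mem_toList.2 hx, rfl⟩)))).2 rfl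
        simp only [dotLM, LinearMap.coe_mk, AddHom.coe_mk]
        linarith
      have h1 : p ∈ {y | -b < dotLM d w y} :=
        convexHull_min (fun x hx => hpos x hx)
          (convex_halfSpace_gt (dotLM d w).isLinear (-b)) hptP
      have h2 : p ∈ {y | dotLM d w y < -b} :=
        convexHull_min (fun x hx => hneg x hx)
          (convex_halfSpace_lt (dotLM d w).isLinear (-b)) hptN
      simp only [Set.mem_setOf_eq] at h1 h2
      linarith
end

section
/- Let X, Y be finite subsets of R^d and let h_1, ..., h_T be affine hyperplanes (half-space classifiers), each separating Y from some subset of X. Suppose every point x in X is separated from Y by strictly more than a (1 - 1/(d+1)) fraction of the h_t's (meaning: for each x, the number of indices t such that h_t strictly separates x from all of Y is greater than (1 - 1/(d+1))·T). Then conv(X) and conv(Y) are disjoint. -/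
/-- The hyperplane given by (w, b) separates the point x from the set Y:
x lies strictly on one side and all of Y strictly on the other side. -/
def SepPt (d : ℕ) (w : Fin d → ℝ) (b : ℝ) (x : Fin d → ℝ)
    (Y : Finset (Fin d → ℝ)) : Prop :=
  (0 < (∑ i, w i * x i) + b ∧ ∀ y ∈ Y, (∑ i, w i * y i) + b < 0) ∨
  ((∑ i, w i * x i) + b < 0 ∧ ∀ y ∈ Y, 0 < (∑ i, w i * y i) + b)

/-- If every point of X is separated from Y by strictly more than a
(1 - 1/(d+1)) fraction of the hyperplanes h_1, ..., h_T, then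
conv(X) and conv(Y) are disjoint. -/
theorem conv_disjoint_of_supermajority_sep (d T : ℕ) (X Y : Finset (Fin d → ℝ))
    (w : Fin T → (Fin d → ℝ)) (b : Fin T → ℝ)
    (hsep : ∀ x ∈ X, (1 - 1 / ((d : ℝ) + 1)) * T <
      Nat.card {t : Fin T // SepPt d (w t) (b t) x Y}) :
    Disjoint (convexHull ℝ (X : Set (Fin d → ℝ)))
      (convexHull ℝ (Y : Set (Fin d → ℝ))) := by
  classical
  rcases Y.eq_empty_or_nonempty with rfl | ⟨y0, hy0⟩
  · simp
  rw [Set.disjoint_left]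
  rintro p hpX hpY
  -- Carathéodory: p ∈ conv S for S ⊆ X affinely independent
  rw [convexHull_eq_union] at hpX
  simp only [Set.mem_iUnion, exists_prop] at hpX
  obtain ⟨S, hSX, hSai, hpS⟩ := hpX
  have hScard : (S.card : ℝ) ≤ (d : ℝ) + 1 := by
    have h1 := hSai.card_le_finrank_succ
    have h2 : Module.finrank ℝ (vectorSpan ℝ (Set.range ((↑) : S → (Fin d → ℝ)))) ≤ d := by
      have := Submodule.finrank_le (vectorSpan ℝ (Set.range ((↑) : S → (Fin d → ℝ))))
      simpa using this
    have : S.card ≤ d + 1 := by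
      have := h1.trans (Nat.add_le_add_right h2 1)
      simpa [Fintype.card_coe] using this
    exact_mod_cast this
  -- counting: find t separating every x ∈ S from Y
  set good : (Fin d → ℝ) → Finset (Fin T) :=
    fun x => Finset.univ.filter (fun t => SepPt d (w t) (b t) x Y) with hgood
  have hcard : ∀ x ∈ S, (1 - 1 / ((d : ℝ) + 1)) * T < (good x).card := by
    intro x hx
    have := hsep x (hSX hx)
    rwa [Nat.card_eq_fintype_card, Fintype.card_subtype] at this
  have hd1 : (0:ℝ) < (d : ℝ) + 1 := by positivity
  have hbad : ∀ x ∈ S, ((Finset.univ \ good x).card : ℝ) < T / ((d:ℝ)+1) := by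
    intro x hx
    have h := hcard x hx
    have hsub : (Finset.univ \ good x).card = T - (good x).card := by
      rw [Finset.card_sdiff_of_subset (Finset.subset_univ _), Finset.card_univ, Fintype.card_fin]
    rw [hsub]
    have hle : (good x).card ≤ T := by
      simpa using Finset.card_le_card (Finset.subset_univ (good x))
    rw [Nat.cast_sub hle]
    have : (1 - 1 / ((d : ℝ) + 1)) * T = T - T / ((d:ℝ)+1) := by ring
    rw [this] at h
    linarith
  -- the union of bad sets has card < T
  have hbUcard : ((S.biUnion (fun x => Finset.univ \ good x)).card : ℝ) < T := by
    calc ((S.biUnion (fun x => Finset.univ \ good x)).card : ℝ)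
        ≤ ∑ x ∈ S, ((Finset.univ \ good x).card : ℝ) := by
          exact_mod_cast Finset.card_biUnion_le
      _ < ∑ _x ∈ S, (T / ((d:ℝ)+1)) := by
          apply Finset.sum_lt_sum_of_nonempty
          · rcases S.eq_empty_or_nonempty with rfl | h
            · simp at hpS
            · exact h
          · exact hbad
      _ = S.card * (T / ((d:ℝ)+1)) := by rw [Finset.sum_const, nsmul_eq_mul]
      _ ≤ ((d:ℝ)+1) * (T / ((d:ℝ)+1)) := by
          apply mul_le_mul_of_nonneg_right hScard; positivity
      _ = T := by field_simp
  have hne : S.biUnion (fun x => Finset.univ \ good x) ≠ Finset.univ := by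
    intro h
    rw [h, Finset.card_univ, Fintype.card_fin] at hbUcard
    exact lt_irrefl _ hbUcard
  obtain ⟨t, ht⟩ : ∃ t : Fin T, ∀ x ∈ S, SepPt d (w t) (b t) x Y := by
    have : ∃ t : Fin T, t ∉ S.biUnion (fun x => Finset.univ \ good x) := by
      by_contra hc
      push_neg at hc
      exact hne (Finset.eq_univ_iff_forall.2 hc)
    obtain ⟨t, ht⟩ := this
    refine ⟨t, fun x hx => ?_⟩
    simp only [Finset.mem_biUnion, not_exists] at ht
    have := ht x
    simp only [Finset.mem_sdiff, Finset.mem_univ, true_and, not_and, not_not, hgood,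
      Finset.mem_filter] at this
    exact this hx
  -- the hyperplane t separates conv S from conv Y
  set f : (Fin d → ℝ) → ℝ := fun z => (∑ i, w t i * z i) + b t with hf
  have hlin : IsLinearMap ℝ (fun z : Fin d → ℝ => ∑ i, w t i * z i) := by
    constructor
    · intro u v; simp [Pi.add_apply, mul_add, Finset.sum_add_distrib]
    · intro c u
      simp only [Pi.smul_apply, smul_eq_mul, Finset.mul_sum]
      exact Finset.sum_congr rfl fun i _ => by ring
  have key : (∀ x ∈ S, 0 < f x) ∧ (∀ y ∈ Y, f y < 0) ∨
      (∀ x ∈ S, f x < 0) ∧ (∀ y ∈ Y, 0 < f y) := by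
    by_cases hy : f y0 < 0
    · left
      constructor
      · intro x hx
        rcases ht x hx with ⟨h1, _⟩ | ⟨_, h2⟩
        · exact h1
        · exact absurd (h2 y0 hy0) (not_lt.2 hy.le)
      · intro y hy'
        rcases S.eq_empty_or_nonempty with rfl | ⟨x, hx⟩
        · exfalso; simp at hpS
        rcases ht x hx with ⟨_, h2⟩ | ⟨_, h2⟩
        · exact h2 y hy'
        · exact absurd (h2 y0 hy0) (not_lt.2 hy.le)
    · right
      push_neg at hy
      constructor
      · intro x hx
        rcases ht x hx with ⟨_, h2⟩ | ⟨h1, _⟩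
        · exact absurd (h2 y0 hy0) (not_lt.2 hy)
        · exact h1
      · intro y hy'
        rcases S.eq_empty_or_nonempty with rfl | ⟨x, hx⟩
        · exfalso; simp at hpS
        rcases ht x hx with ⟨_, h2⟩ | ⟨_, h2⟩
        · exact absurd (h2 y0 hy0) (not_lt.2 hy)
        · exact h2 y hy'
  have hconvpos : Convex ℝ {z : Fin d → ℝ | 0 < f z} := by
    have : {z : Fin d → ℝ | 0 < f z}
        = {z : Fin d → ℝ | -(b t) < ∑ i, w t i * z i} := by
      ext z; simp [hf]; constructor <;> intro <;> linarith
    rw [this]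
    exact convex_halfSpace_gt hlin _
  have hconvneg : Convex ℝ {z : Fin d → ℝ | f z < 0} := by
    have : {z : Fin d → ℝ | f z < 0}
        = {z : Fin d → ℝ | (∑ i, w t i * z i) < -(b t)} := by
      ext z; simp [hf]; constructor <;> intro <;> linarith
    rw [this]
    exact convex_halfSpace_lt hlin _
  rcases key with ⟨hxpos, hyneg⟩ | ⟨hxneg, hypos⟩
  · have h1 : p ∈ {z : Fin d → ℝ | 0 < f z} :=
      convexHull_min (fun z hz => hxpos z (by exact_mod_cast hz)) hconvpos hpS
    have h2 : p ∈ {z : Fin d → ℝ | f z < 0} :=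
      convexHull_min (fun z hz => hyneg z (by exact_mod_cast hz)) hconvneg hpY
    exact absurd h2 (by simpa using not_lt.2 h1.le)
  · have h1 : p ∈ {z : Fin d → ℝ | f z < 0} :=
      convexHull_min (fun z hz => hxneg z (by exact_mod_cast hz)) hconvneg hpS
    have h2 : p ∈ {z : Fin d → ℝ | 0 < f z} :=
      convexHull_min (fun z hz => hypos z (by exact_mod_cast hz)) hconvpos hpY
    exact absurd h2 (by simpa using not_lt.2 h1.le)
end

section
/- Boosting margin bound: Let S be a finite sample, let W_1(z)=1 for all z in S, and for t ≥ 1 define W_{t+1}(z) = W_t(z)·2^{-[h_t correct on z]} where h_1,...,h_T is a sequence of hypotheses such that each h_t has weighted error at most 1/(5k) with respect to the distribution p_t(z) = W_t(z)/Σ_{z'} W_t(z'). If T ≥ 2k·log₂|S| for some k > 0, then for every z = (x,y) in S, the fraction of indices t ≤ T with h_t(x) ≠ y is at most 1/k. -/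
/-- Boosting weight: `Wt h t z = 2^{-#{s < t : h_s correct on z}}`, so that
`Wt h 0 z = 1` and `Wt h (t+1) z = Wt h t z · 2^{-[h_t correct on z]}`. -/
noncomputable def Wt {X : Type*} (h : ℕ → X → Bool) (t : ℕ) (z : X × Bool) : ℝ :=
  ((2 : ℝ) ^ (((Finset.range t).filter (fun s => h s z.1 = z.2)).card))⁻¹

/-- The potential `Φ_t = ∑_{z ∈ S} W_t(z)`. -/
noncomputable def Phi {X : Type*} (S : Finset (X × Bool)) (h : ℕ → X → Bool)
    (t : ℕ) : ℝ :=
  ∑ z ∈ S, Wt h t z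

lemma Wt_pos {X : Type*} (h : ℕ → X → Bool) (t : ℕ) (z : X × Bool) : 0 < Wt h t z := by
  unfold Wt; positivity

lemma Wt_succ {X : Type*} (h : ℕ → X → Bool) (t : ℕ) (z : X × Bool) :
    Wt h (t+1) z = if h t z.1 = z.2 then Wt h t z / 2 else Wt h t z := by
  unfold Wt
  rw [Finset.range_add_one, Finset.filter_insert]
  split
  · rw [Finset.card_insert_of_notMem (by simp), pow_succ]
    field_simp
  · rfl

lemma Phi_step {X : Type*} (S : Finset (X × Bool)) (h : ℕ → X → Bool)
    (k : ℝ) (hk : 0 < k) (t : ℕ) (hS : S.Nonempty)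
    (hw : (∑ z ∈ S.filter (fun z => h t z.1 ≠ z.2), Wt h t z) / Phi S h t ≤ 1 / (5 * k)) :
    Phi S h (t+1) ≤ Phi S h t * ((1 + 1/(5*k)) / 2) := by
  have hPhi_pos : 0 < Phi S h t := Finset.sum_pos (fun z _ => Wt_pos h t z) hS
  set A := ∑ z ∈ S.filter (fun z => h t z.1 ≠ z.2), Wt h t z with hA
  set B := ∑ z ∈ S.filter (fun z => ¬ (h t z.1 ≠ z.2)), Wt h t z with hB
  have hA' : A ≤ Phi S h t * (1/(5*k)) := by
    have := (div_le_iff₀ hPhi_pos).mp hw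
    linarith
  have h1 : ∑ z ∈ S.filter (fun z => h t z.1 ≠ z.2), Wt h (t+1) z = A := by
    apply Finset.sum_congr rfl
    intro w hw'
    rw [Wt_succ]
    simp only [Finset.mem_filter] at hw'
    simp [hw'.2]
  have h2 : ∑ z ∈ S.filter (fun z => ¬ (h t z.1 ≠ z.2)), Wt h (t+1) z = B / 2 := by
    rw [hB, Finset.sum_div]
    apply Finset.sum_congr rfl
    intro w hw'
    rw [Wt_succ]
    simp only [Finset.mem_filter, not_not] at hw'
    simp [hw'.2]
  have hsum : A + B = Phi S h t := Finset.sum_filter_add_sum_filter_not S _ _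
  have hsplit : Phi S h (t+1) = A + B / 2 := by
    unfold Phi
    rw [← Finset.sum_filter_add_sum_filter_not S (fun z => h t z.1 ≠ z.2), h1, h2]
  rw [hsplit]
  have hA0 : 0 ≤ A := Finset.sum_nonneg fun w _ => (Wt_pos h t w).le
  calc A + B / 2 = (A + (A + B)) / 2 := by ring
    _ = (A + Phi S h t) / 2 := by rw [hsum]
    _ ≤ (Phi S h t * (1/(5*k)) + Phi S h t) / 2 := by linarith
    _ = Phi S h t * ((1 + 1/(5*k)) / 2) := by ring

lemma geom_fact (k : ℝ) (hk : 0 < k) :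
    (1 + 1/(5*k)) / 2 ≤ (2:ℝ) ^ ((-1 : ℝ) + 1/(2*k)) := by
  have h1 : (2:ℝ) ^ ((-1 : ℝ) + 1/(2*k)) = (2:ℝ) ^ ((1:ℝ)/(2*k)) / 2 := by
    rw [Real.rpow_add two_pos]
    norm_num [Real.rpow_neg_one]
    ring
  rw [h1, div_le_div_iff_of_pos_right two_pos]
  rw [Real.rpow_def_of_pos two_pos]
  have hexp := Real.add_one_le_exp (Real.log 2 * ((1:ℝ)/(2*k)))
  have hlog := Real.log_two_gt_d9
  have heq : Real.log 2 * ((1:ℝ)/(2*k)) - 1/(5*k) = (5*Real.log 2 - 2)/(10*k) := by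
    field_simp; ring
  have hnum : (0:ℝ) ≤ (5*Real.log 2 - 2)/(10*k) := by
    apply div_nonneg _ (by positivity)
    nlinarith
  linarith

lemma Phi_bound {X : Type*} (S : Finset (X × Bool)) (h : ℕ → X → Bool)
    (k : ℝ) (hk : 0 < k) (hS : S.Nonempty) (T : ℕ)
    (hweak : ∀ t < T,
      (∑ z ∈ S.filter (fun z => h t z.1 ≠ z.2), Wt h t z) / Phi S h t ≤ 1 / (5 * k)) :
    Phi S h T ≤ (S.card : ℝ) * (2:ℝ) ^ (((-1 : ℝ) + 1/(2*k)) * T) := by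
  induction T with
  | zero =>
    simp [Phi, Wt]
  | succ n ih =>
    have hstep := Phi_step S h k hk n hS (hweak n (Nat.lt_succ_self n))
    have ih' := ih (fun t ht => hweak t (ht.trans (Nat.lt_succ_self n)))
    have hr : (0:ℝ) < (2:ℝ) ^ ((-1 : ℝ) + 1/(2*k)) := Real.rpow_pos_of_pos two_pos _
    have hc : (0:ℝ) ≤ (1 + 1/(5*k)) / 2 := by positivity
    push_cast
    calc Phi S h (n+1) ≤ Phi S h n * ((1 + 1/(5*k)) / 2) := hstep
      _ ≤ ((S.card : ℝ) * (2:ℝ) ^ (((-1 : ℝ) + 1/(2*k)) * n)) * ((2:ℝ) ^ ((-1:ℝ) + 1/(2*k))) := by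
          apply mul_le_mul ih' (geom_fact k hk) hc (by positivity)
      _ = (S.card : ℝ) * (2:ℝ) ^ (((-1 : ℝ) + 1/(2*k)) * ((n:ℝ)+1)) := by
          rw [mul_assoc, ← Real.rpow_add two_pos]
          congr 1
          ring

/-- Boosting margin bound: if each `h_t` has weighted error at most `1/(5k)`
with respect to the distribution `p_t(z) = W_t(z)/Φ_t`, and
`T ≥ 2k·log₂|S|`, then every example in `S` is misclassified by at most a
`1/k` fraction of the `h_t`'s. -/
theorem boosting_margin {X : Type*} (S : Finset (X × Bool)) (h : ℕ → X → Bool)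
    (k : ℝ) (hk : 0 < k) (T : ℕ)
    (hT : 2 * k * Real.logb 2 (S.card) ≤ T)
    (hweak : ∀ t < T,
      (∑ z ∈ S.filter (fun z => h t z.1 ≠ z.2), Wt h t z) / Phi S h t ≤
        1 / (5 * k)) :
    ∀ z ∈ S,
      (((Finset.range T).filter (fun t => h t z.1 ≠ z.2)).card : ℝ) / T ≤
        1 / k := by
  intro z hz
  rcases Nat.eq_zero_or_pos T with hT0 | hTpos
  · subst hT0; simp; positivity
  set m := ((Finset.range T).filter (fun t => h t z.1 ≠ z.2)).card with hm
  have hcards : ((Finset.range T).filter (fun s => h s z.1 = z.2)).card = T - m := by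
    have := Finset.card_filter_add_card_filter_not (s := Finset.range T)
      (p := fun s => h s z.1 = z.2)
    simp only [Finset.card_range] at this
    have hm' : ((Finset.range T).filter (fun s => ¬ h s z.1 = z.2)).card = m := by
      rw [hm]
    omega
  have hle : Wt h T z ≤ Phi S h T :=
    Finset.single_le_sum (f := fun z => Wt h T z) (fun w _ => (Wt_pos h T w).le) hz
  have hbd := Phi_bound S h k hk ⟨z, hz⟩ T hweak
  have hmain : Wt h T z ≤ (S.card : ℝ) * (2:ℝ) ^ (((-1 : ℝ) + 1/(2*k)) * T) := hle.trans hbd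
  have hWt : Wt h T z = (2:ℝ) ^ (-((T - m : ℕ) : ℝ)) := by
    unfold Wt
    rw [hcards, ← Real.rpow_natCast 2 (T - m), ← Real.rpow_neg two_pos.le]
  have hScard_pos : (0:ℝ) < (S.card : ℝ) := by
    have : 0 < S.card := Finset.card_pos.mpr ⟨z, hz⟩
    exact_mod_cast this
  have hlogle : Real.logb 2 (Wt h T z) ≤
      Real.logb 2 ((S.card : ℝ) * (2:ℝ) ^ (((-1 : ℝ) + 1/(2*k)) * T)) :=
    Real.logb_le_logb_of_le (by norm_num) (Wt_pos h T z) hmain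
  rw [hWt, Real.logb_rpow (by norm_num), Real.logb_mul (ne_of_gt hScard_pos)
    (ne_of_gt (Real.rpow_pos_of_pos two_pos _)), Real.logb_rpow (by norm_num)] at hlogle <;> norm_num
  have hmT : m ≤ T := by
    have := Finset.card_filter_le (Finset.range T) (fun t => h t z.1 ≠ z.2)
    simpa using this
  have hcast : (((T - m : ℕ)) : ℝ) = (T : ℝ) - m := by
    push_cast [Nat.cast_sub hmT]; ring
  rw [hcast] at hlogle
  have hlogS : Real.logb 2 (S.card : ℝ) ≤ (T : ℝ) / (2*k) := by
    rw [le_div_iff₀ (by positivity)]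
    nlinarith [hT]
  have hexpand : ((-1:ℝ) + 1/(2*k)) * T = -(T:ℝ) + (T:ℝ)/(2*k) := by ring
  have hmk : (m : ℝ) ≤ (T:ℝ) / k := by
    have h3 : (m:ℝ) ≤ Real.logb 2 (S.card : ℝ) + (T:ℝ)/(2*k) := by
      linarith [hlogle, hexpand, hexpand ▸ hlogle]
    have h4 : (T:ℝ)/(2*k) + (T:ℝ)/(2*k) = (T:ℝ)/k := by
      field_simp
      ring
    linarith
  have hTpos' : (0:ℝ) < T := by exact_mod_cast hTpos
  rw [le_div_iff₀ hk] at hmk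
  rw [div_le_iff₀ hTpos', inv_mul_eq_div, le_div_iff₀ hk]
  linarith
end

section
/- Let H be a hypothesis class with coVC dimension k > 0. For any finite sample S not realizable by H and for any finite sequence h_1, ..., h_T of hypotheses in H, there exists an example (x,y) in S such that the fraction of indices t with h_t(x) ≠ y is at least 1/k. -/
/-- A sample is realizable by the class H if some hypothesis of H is
consistent with all its examples. -/
def Realizable {X : Type*} (H : Set (X → Bool)) (S : List (X × Bool)) : Prop :=
  ∃ h ∈ H, ∀ z ∈ S, h z.1 = z.2

/-- If H has coVC dimension (at most) k > 0, then for every non-realizable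
sample S and every finite sequence h_1, ..., h_T of hypotheses in H, some
example of S is misclassified by at least a 1/k fraction of the h_t's. -/
theorem covc_error {X : Type*} (H : Set (X → Bool)) (k : ℕ) (hk : 0 < k)
    (hcovc : ∀ S : List (X × Bool), ¬ Realizable H S →
      ∃ S', (∀ z ∈ S', z ∈ S) ∧ S'.length ≤ k ∧ ¬ Realizable H S')
    (S : List (X × Bool)) (hS : ¬ Realizable H S)
    (T : ℕ) (hT : 0 < T) (h : Fin T → X → Bool) (hh : ∀ t, h t ∈ H) :
    ∃ z ∈ S, (1 : ℝ) / k ≤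
      ((Finset.univ.filter (fun t : Fin T => h t z.1 ≠ z.2)).card : ℝ) / T := by
  classical
  by_contra hcon
  push_neg at hcon
  obtain ⟨S', hsub, hlen, hnr⟩ := hcovc S hS
  have hne : S' ≠ [] := by
    intro he
    exact hnr ⟨h ⟨0, hT⟩, hh _, by simp [he]⟩
  have key : ∀ t : Fin T, ∃ z ∈ S', h t z.1 ≠ z.2 := by
    intro t
    by_contra hc
    push_neg at hc
    exact hnr ⟨h t, hh t, hc⟩
  choose F hF1 hF2 using key
  have hmap : ∀ t ∈ (Finset.univ : Finset (Fin T)), F t ∈ S'.toFinset := by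
    intro t _; simpa using hF1 t
  have hsum := Finset.card_eq_sum_card_fiberwise hmap
  rw [Finset.card_fin] at hsum
  set errc : X × Bool → ℕ := fun z => (Finset.univ.filter (fun t : Fin T => h t z.1 ≠ z.2)).card with herrc
  have hfib : ∀ z ∈ S'.toFinset,
      (Finset.univ.filter (fun t => F t = z)).card ≤ errc z := by
    intro z _
    apply Finset.card_le_card
    intro t ht
    simp only [Finset.mem_filter] at ht ⊢
    exact ⟨Finset.mem_univ t, ht.2 ▸ hF2 t⟩
  have hkpos : (0:ℝ) < k := by exact_mod_cast hk
  have hTpos : (0:ℝ) < T := by exact_mod_cast hT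
  have hstrict : ∀ z ∈ S'.toFinset, (errc z : ℝ) < T / k := by
    intro z hz
    have hzS : z ∈ S := hsub z (List.mem_toFinset.mp hz)
    have := hcon z hzS
    rw [div_lt_div_iff₀ hTpos hkpos] at this
    rw [lt_div_iff₀ hkpos]
    linarith
  have hne' : S'.toFinset.Nonempty := by
    obtain ⟨z, hz⟩ := List.exists_mem_of_ne_nil S' hne
    exact ⟨z, List.mem_toFinset.mpr hz⟩
  have h1 : (T:ℝ) = ∑ z ∈ S'.toFinset, ((Finset.univ.filter (fun t => F t = z)).card : ℝ) := by
    exact_mod_cast hsum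
  have h2 : (∑ z ∈ S'.toFinset, ((Finset.univ.filter (fun t => F t = z)).card : ℝ))
      ≤ ∑ z ∈ S'.toFinset, (errc z : ℝ) := by
    apply Finset.sum_le_sum
    intro z hz
    exact_mod_cast hfib z hz
  have h3 : (∑ z ∈ S'.toFinset, (errc z : ℝ)) < ∑ z ∈ S'.toFinset, (T:ℝ)/k :=
    Finset.sum_lt_sum_of_nonempty hne' hstrict
  have h4 : (∑ z ∈ S'.toFinset, (T:ℝ)/k) = (S'.toFinset.card : ℝ) * ((T:ℝ)/k) := by
    rw [Finset.sum_const, nsmul_eq_mul]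
  have hcard : (S'.toFinset.card : ℝ) ≤ k := by
    have := le_trans S'.toFinset_card_le hlen
    exact_mod_cast this
  have h5 : (S'.toFinset.card : ℝ) * ((T:ℝ)/k) ≤ (k:ℝ) * ((T:ℝ)/k) := by
    apply mul_le_mul_of_nonneg_right hcard
    positivity
  have h6 : (k:ℝ) * ((T:ℝ)/k) = T := by
    field_simp
  linarith
end

section
/- Let H be a hypothesis class over a domain X and let R ⊆ X be a finite set of size n shattered by H. Identify [n] with R. Define F_a(x) = {(i, 1) : x_i = 1} and F_b(y) = {(i, −1) : y_i = 1} for bit-strings x, y ∈ {0,1}^n. Then for all x, y: the sets indicated by x and y are disjoint (∀i, x_i = 0 ∨ y_i = 0) if and only if the joint sample F_a(x) ∪ F_b(y) is realizable by H. -/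
/-- NP reduction: identify [n] with a shattered set via an injection e. For
bit-strings x, y, let F_a(x) be the positively labelled examples at indices
of x and F_b(y) the negatively labelled examples at indices of y. Then x and
y are disjoint iff the joint sample F_a(x) ++ F_b(y) is realizable by H. -/
theorem disjoint_iff_realizable_of_shattered {X : Type*} (H : Set (X → Bool))
    (n : ℕ) (e : Fin n → X) (he : Function.Injective e)
    (hshat : ∀ f : Fin n → Bool, ∃ h ∈ H, ∀ i : Fin n, h (e i) = f i)
    (x y : Fin n → Bool) :
    (∀ i : Fin n, x i = false ∨ y i = false) ↔
      Realizable H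
        (((List.finRange n).filter (fun i => x i)).map (fun i => (e i, true)) ++
         ((List.finRange n).filter (fun i => y i)).map (fun i => (e i, false))) := by
  constructor
  · intro hdisj
    obtain ⟨h, hH, hh⟩ := hshat x
    refine ⟨h, hH, ?_⟩
    intro z hz
    rw [List.mem_append] at hz
    rcases hz with hz | hz <;>
      simp only [List.mem_map, List.mem_filter, List.mem_finRange, true_and] at hz <;>
      obtain ⟨i, hi, rfl⟩ := hz
    · simpa [hh i] using hi
    · have := hdisj i
      simp [hi] at this
      simp [hh i, this]
  · rintro ⟨h, hH, hh⟩ i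
    by_contra hc
    push_neg at hc
    obtain ⟨hx, hy⟩ := hc
    simp only [Bool.ne_false_iff] at hx hy
    have h1 : h (e i) = true := by
      apply hh (e i, true)
      simp only [List.mem_append, List.mem_map, List.mem_filter, List.mem_finRange, true_and]
      exact Or.inl ⟨i, hx, rfl⟩
    have h2 : h (e i) = false := by
      apply hh (e i, false)
      simp only [List.mem_append, List.mem_map, List.mem_filter, List.mem_finRange, true_and]
      exact Or.inr ⟨i, hy, rfl⟩
    simp [h1] at h2
end

section
/- Let H be a hypothesis class and S a non-realizable sample of size n > 1 with distinct points such that every proper subsample of S is realizable by H. Writing S = ((i, b_i))_{i∈[n]}, define for x, y ∈ {0,1}^n: F_a(x) = {(i, b_i) : x_i = 0} and F_b(y) = {(i, b_i) : y_i = 0}. Then x and y are disjoint as subsets of [n] if and only if the joint sample F_a(x) ∪ F_b(y) equals S (as a set), if and only if F_a(x) ∪ F_b(y) is not realizable by H. -/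
lemma mem_union_iff (n : ℕ) (b x y : Fin n → Bool) (z : Fin n × Bool) :
    z ∈ ((List.finRange n).filter (fun i => !(x i))).map (fun i => (i, b i)) ++
        ((List.finRange n).filter (fun i => !(y i))).map (fun i => (i, b i)) ↔
    (z.2 = b z.1 ∧ (x z.1 = false ∨ y z.1 = false)) := by
  simp only [List.mem_append, List.mem_map, List.mem_filter, List.mem_finRange, true_and,
    Bool.not_eq_true']
  constructor
  · rintro (⟨i, hx, rfl⟩ | ⟨i, hy, rfl⟩)
    · exact ⟨rfl, Or.inl hx⟩
    · exact ⟨rfl, Or.inr hy⟩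
  · rintro ⟨h2, hx | hy⟩
    · exact Or.inl ⟨z.1, hx, Prod.ext rfl h2.symm⟩
    · exact Or.inr ⟨z.1, hy, Prod.ext rfl h2.symm⟩

/-- coNP reduction: S = ((i, b_i))_{i ∈ [n]} is non-realizable, every
subsample omitting an example is realizable. With F_a(x) = {(i,b_i) : x_i = 0}
and F_b(y) = {(i,b_i) : y_i = 0}: x and y are disjoint iff the joint sample
F_a(x) ++ F_b(y) equals S as a set, iff it is not realizable by H. -/
theorem conp_reduction (n : ℕ) (hn : 1 < n) (H : Set (Fin n → Bool))
    (b : Fin n → Bool)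
    (hnr : ¬ Realizable H ((List.finRange n).map (fun i => (i, b i))))
    (hsub : ∀ S' : List (Fin n × Bool),
      (∀ z ∈ S', z ∈ (List.finRange n).map (fun i => (i, b i))) →
      (∃ i : Fin n, (i, b i) ∉ S') → Realizable H S')
    (x y : Fin n → Bool) :
    ((∀ i : Fin n, x i = false ∨ y i = false) ↔
      (∀ z ∈ (List.finRange n).map (fun i => (i, b i)),
        z ∈ ((List.finRange n).filter (fun i => !(x i))).map
              (fun i => (i, b i)) ++
            ((List.finRange n).filter (fun i => !(y i))).map
              (fun i => (i, b i)))) ∧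
    ((∀ i : Fin n, x i = false ∨ y i = false) ↔
      ¬ Realizable H
        (((List.finRange n).filter (fun i => !(x i))).map (fun i => (i, b i)) ++
         ((List.finRange n).filter (fun i => !(y i))).map (fun i => (i, b i)))) := by
  have hmemS : ∀ z : Fin n × Bool,
      z ∈ (List.finRange n).map (fun i => (i, b i)) ↔ z.2 = b z.1 := by
    intro z
    simp only [List.mem_map, List.mem_finRange, true_and]
    constructor
    · rintro ⟨i, rfl⟩; rfl
    · intro h2; exact ⟨z.1, Prod.ext rfl h2.symm⟩
  have key : (∀ i : Fin n, x i = false ∨ y i = false) ↔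
      (∀ z ∈ (List.finRange n).map (fun i => (i, b i)),
        z ∈ ((List.finRange n).filter (fun i => !(x i))).map (fun i => (i, b i)) ++
            ((List.finRange n).filter (fun i => !(y i))).map (fun i => (i, b i))) := by
    constructor
    · intro hd z hz
      rw [mem_union_iff]
      exact ⟨(hmemS z).mp hz, hd z.1⟩
    · intro hc i
      have := hc (i, b i) ((hmemS (i, b i)).mpr rfl)
      exact ((mem_union_iff n b x y (i, b i)).mp this).2
  refine ⟨key, key.trans ?_⟩
  constructor
  · intro hc hr
    apply hnr
    obtain ⟨h, hH, hh⟩ := hr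
    exact ⟨h, hH, fun z hz => hh z (hc z hz)⟩
  · intro hnr2
    by_contra hc
    push_neg at hc
    obtain ⟨z0, hz0S, hz0⟩ := hc
    have hz0b : z0.2 = b z0.1 := (hmemS z0).mp hz0S
    apply hnr2
    apply hsub
    · intro z hz
      rw [hmemS]
      exact ((mem_union_iff n b x y z).mp hz).1
    · refine ⟨z0.1, fun hm => hz0 ?_⟩
      have : z0 = (z0.1, b z0.1) := Prod.ext rfl hz0b
      rw [this]
      exact hm
end
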